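/- For any tripartite density operator ρ_ABC, C^{AB|C}_{l1}(ρ_ABC) ≥ C^{A|C}_{l1}(ρ_AC) + C^{B|C}_{l1}(ρ_BC), where ρ_AC = Tr_B ρ_ABC and ρ_BC = Tr_A ρ_ABC (monogamy of the l1 IQ coherence). -/

import Mathlib

open scoped BigOperators ComplexOrder Kronecker

/-- Trace norm: `‖P‖_tr = Tr √(Pᴴ P)`. -/
noncomputable def traceNorm {n : Type*} [Fintype n] [DecidableEq n] (P : Matrix n n ℂ) : ℝ :=
  (((Matrix.posSemidef_conjTranspose_mul_self P).1.eigenvectorUnitary.1 *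
    Matrix.diagonal (((↑) : ℝ → ℂ) ∘ (√·) ∘ (Matrix.posSemidef_conjTranspose_mul_self P).1.eigenvalues) *
    (star (Matrix.posSemidef_conjTranspose_mul_self P).1.eigenvectorUnitary : Matrix n n ℂ)).trace).re

/-- The blocks of an operator on H_X ⊗ H_Y with respect to a basis of X. -/
def blockB {X Y : Type*} (Q : Matrix (X × Y) (X × Y) ℂ) (i j : X) : Matrix Y Y ℂ :=
  fun b b' => Q (i, b) (j, b')

/-- l1 norm of IQ coherence C^{X|Y}_{l1}(ρ) = Σ_{i≠j} ‖ρ^Y_{ij}‖_tr. -/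
noncomputable def CIQl1 {X Y : Type*} [Fintype X] [Fintype Y] [DecidableEq X] [DecidableEq Y]
    (ρ : Matrix (X × Y) (X × Y) ℂ) : ℝ :=
  ∑ i, ∑ j, if i = j then 0 else traceNorm (blockB ρ i j)

/-!
The `(i, j)` block of `Tr_B ρ` is `∑ m, ρ_{(i,m),(j,m)}` and the `(m, m')` block of `Tr_A ρ` is
`∑ i, ρ_{(i,m),(i,m')}`, so by the triangle inequality for the trace norm the two right-hand
coherences are bounded by sums of trace norms of off-diagonal blocks of `ρ`: those with equal
`B`-index and those with equal `A`-index. These two families of blocks are disjoint, hence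
together bounded by `C^{AB|C}(ρ)`.

The triangle inequality comes from `‖X‖_tr = max {Re tr (Cᴴ X) | Cᴴ C ≤ 1}`: the bound holds by
Cauchy–Schwarz in an eigenbasis of `Xᴴ X`, and is attained by the partial isometry of the polar
decomposition of `X`.
-/

section TraceNorm

open Matrix
open scoped MatrixOrder InnerProductSpace

variable {n : Type*} [Fintype n] [DecidableEq n]

lemma traceNorm_eq_sum_sqrt_eigenvalues (A : Matrix n n ℂ) :
    traceNorm A = ∑ i, √((posSemidef_conjTranspose_mul_self A).1.eigenvalues i) := by
  simp [traceNorm, trace_mul_cycle, Complex.re_sum, trace_diagonal]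

lemma traceNorm_nonneg (A : Matrix n n ℂ) : 0 ≤ traceNorm A := by
  rw [traceNorm_eq_sum_sqrt_eigenvalues]
  exact Finset.sum_nonneg fun i _ => Real.sqrt_nonneg _

lemma trace_eq_sum_inner_toEuclideanLin (M : Matrix n n ℂ)
    (b : OrthonormalBasis n ℂ (EuclideanSpace ℂ n)) :
    M.trace = ∑ i, ⟪b i, toEuclideanLin M (b i)⟫_ℂ := by
  rw [← LinearMap.trace_eq_sum_inner,
    LinearMap.trace_eq_matrix_trace ℂ (EuclideanSpace.basisFun n ℂ).toBasis,
    toEuclideanLin_eq_toLin_orthonormal, LinearMap.toMatrix_toLin]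

lemma inner_toEuclideanLin_toEuclideanLin (C A : Matrix n n ℂ) (x y : EuclideanSpace ℂ n) :
    ⟪toEuclideanLin C x, toEuclideanLin A y⟫_ℂ = ⟪x, toEuclideanLin (Cᴴ * A) y⟫_ℂ := by
  rw [toLpLin_mul_same, LinearMap.comp_apply, toEuclideanLin_conjTranspose_eq_adjoint,
    LinearMap.adjoint_inner_right]

lemma norm_sq_toEuclideanLin (A : Matrix n n ℂ) (x : EuclideanSpace ℂ n) :
    ‖toEuclideanLin A x‖ ^ 2 = RCLike.re ⟪x, toEuclideanLin (Aᴴ * A) x⟫_ℂ := by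
  rw [← inner_toEuclideanLin_toEuclideanLin, ← @inner_self_eq_norm_sq ℂ]

lemma norm_toEuclideanLin_eigenvectorBasis (A : Matrix n n ℂ) (i : n) :
    ‖toEuclideanLin A ((posSemidef_conjTranspose_mul_self A).1.eigenvectorBasis i)‖ =
      √((posSemidef_conjTranspose_mul_self A).1.eigenvalues i) := by
  set hA := (posSemidef_conjTranspose_mul_self A).1
  have hv : toEuclideanLin (Aᴴ * A) (hA.eigenvectorBasis i) =
      (hA.eigenvalues i : ℂ) • hA.eigenvectorBasis i := by
    rw [toLpLin_apply, hA.mulVec_eigenvectorBasis, RCLike.real_smul_eq_coe_smul (K := ℂ)]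
    rfl
  rw [← Real.sqrt_sq (norm_nonneg _), norm_sq_toEuclideanLin, hv, inner_smul_right,
    hA.eigenvectorBasis.inner_eq_one]
  simp

lemma norm_toEuclideanLin_le_of_conjTranspose_mul_self_le_one {C : Matrix n n ℂ}
    (hC : Cᴴ * C ≤ 1) (x : EuclideanSpace ℂ n) : ‖toEuclideanLin C x‖ ≤ ‖x‖ := by
  have h := (isPositive_toEuclideanLin_iff.mpr (Matrix.le_iff.mp hC)).re_inner_nonneg_right x
  rw [map_sub, LinearMap.sub_apply, inner_sub_right, map_sub, toLpLin_one] at h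
  refine (sq_le_sq₀ (norm_nonneg _) (norm_nonneg _)).mp ?_
  rw [norm_sq_toEuclideanLin, ← @inner_self_eq_norm_sq ℂ]
  simpa [sub_nonneg] using h

lemma re_trace_conjTranspose_mul_le_traceNorm {C : Matrix n n ℂ} (hC : Cᴴ * C ≤ 1)
    (A : Matrix n n ℂ) : (Cᴴ * A).trace.re ≤ traceNorm A := by
  set v := (posSemidef_conjTranspose_mul_self A).1.eigenvectorBasis
  rw [trace_eq_sum_inner_toEuclideanLin _ v, Complex.re_sum, traceNorm_eq_sum_sqrt_eigenvalues]
  refine Finset.sum_le_sum fun i _ => ?_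
  calc (⟪v i, toEuclideanLin (Cᴴ * A) (v i)⟫_ℂ).re
      = RCLike.re ⟪toEuclideanLin C (v i), toEuclideanLin A (v i)⟫_ℂ := by
        rw [inner_toEuclideanLin_toEuclideanLin]; rfl
    _ ≤ ‖toEuclideanLin C (v i)‖ * ‖toEuclideanLin A (v i)‖ := re_inner_le_norm _ _
    _ ≤ 1 * ‖toEuclideanLin A (v i)‖ := by
        gcongr
        simpa [v.norm_eq_one] using
          norm_toEuclideanLin_le_of_conjTranspose_mul_self_le_one hC (v i)
    _ = _ := by rw [one_mul, norm_toEuclideanLin_eigenvectorBasis]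

lemma exists_conjTranspose_mul_self_le_one_and_re_trace_eq_traceNorm (A : Matrix n n ℂ) :
    ∃ C : Matrix n n ℂ, Cᴴ * C ≤ 1 ∧ (Cᴴ * A).trace.re = traceNorm A := by
  set hA := (posSemidef_conjTranspose_mul_self A).1
  set W : Matrix n n ℂ := (hA.eigenvectorUnitary : Matrix n n ℂ)
  set s : n → ℝ := fun i => √(hA.eigenvalues i)
  -- `W D Wᴴ` is the pseudo-inverse of `|A| = W diag(s) Wᴴ` (using `0⁻¹ = 0`), and `C = A |A|⁺`.
  set D : Matrix n n ℂ := diagonal fun i => (((s i)⁻¹ : ℝ) : ℂ)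
  have hW : W * star W = 1 := Unitary.coe_mul_star_self _
  have hdiag : star W * (Aᴴ * A) * W = diagonal fun i => (hA.eigenvalues i : ℂ) := by
    have := hA.conjStarAlgAut_star_eigenvectorUnitary
    rwa [Unitary.conjStarAlgAut_star_apply] at this
  have hD : Dᴴ = D := by simp [D, diagonal_conjTranspose]
  have hC : (A * W * D * star W)ᴴ = W * D * star W * Aᴴ := by
    simp only [conjTranspose_mul, hD, star_eq_conjTranspose, conjTranspose_conjTranspose,
      mul_assoc]
  refine ⟨A * W * D * star W, ?_, ?_⟩
  · have hle : diagonal (fun i => (((s i)⁻¹ * hA.eigenvalues i * (s i)⁻¹ : ℝ) : ℂ)) ≤ 1 := by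
      rw [Matrix.le_iff, ← diagonal_one, diagonal_sub]
      refine PosSemidef.diagonal fun i => ?_
      rw [Pi.zero_apply, sub_nonneg, ← Complex.ofReal_one, Complex.real_le_real, inv_mul_eq_div,
        Real.div_sqrt, ← div_eq_mul_inv]
      exact div_self_le_one _
    calc (A * W * D * star W)ᴴ * (A * W * D * star W)
        = W * (D * (star W * (Aᴴ * A) * W) * D) * star W := by
          rw [hC]; simp only [mul_assoc]
      _ = W * diagonal (fun i => (((s i)⁻¹ * hA.eigenvalues i * (s i)⁻¹ : ℝ) : ℂ)) * star W := by
          rw [hdiag, diagonal_mul_diagonal, diagonal_mul_diagonal]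
          push_cast; rfl
      _ ≤ W * 1 * star W := star_right_conjugate_le_conjugate hle W
      _ = 1 := by rw [mul_one, hW]
  · calc ((A * W * D * star W)ᴴ * A).trace.re = (D * (star W * (Aᴴ * A) * W)).trace.re := by
          rw [hC, mul_assoc, mul_assoc, mul_assoc, trace_mul_comm]
          simp only [mul_assoc]
      _ = traceNorm A := by
          rw [hdiag, diagonal_mul_diagonal, trace_diagonal, Complex.re_sum,
            traceNorm_eq_sum_sqrt_eigenvalues]
          refine Finset.sum_congr rfl fun i _ => ?_
          rw [← Complex.ofReal_mul, Complex.ofReal_re, inv_mul_eq_div, Real.div_sqrt]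

lemma traceNorm_sum_le {ι : Type*} (s : Finset ι) (f : ι → Matrix n n ℂ) :
    traceNorm (∑ i ∈ s, f i) ≤ ∑ i ∈ s, traceNorm (f i) := by
  obtain ⟨C, hC, hCf⟩ :=
    exists_conjTranspose_mul_self_le_one_and_re_trace_eq_traceNorm (∑ i ∈ s, f i)
  rw [← hCf, Finset.mul_sum, trace_sum, Complex.re_sum]
  exact Finset.sum_le_sum fun i _ => re_trace_conjTranspose_mul_le_traceNorm hC (f i)

end TraceNorm

lemma CIQl1_le_of_blockB_eq_sum {X Y ι : Type*} [Fintype X] [Fintype Y] [Fintype ι]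
    [DecidableEq X] [DecidableEq Y] (σ : Matrix (X × Y) (X × Y) ℂ) (F : X → X → ι → Matrix Y Y ℂ)
    (hσ : ∀ i j, blockB σ i j = ∑ k, F i j k) :
    CIQl1 σ ≤ ∑ i, ∑ j, if i = j then 0 else ∑ k, traceNorm (F i j k) := by
  refine Finset.sum_le_sum fun i _ => Finset.sum_le_sum fun j _ => ?_
  split_ifs
  · rfl
  · rw [hσ]
    exact traceNorm_sum_le _ _

lemma sum_offDiag_fst_add_sum_offDiag_snd_le {α β : Type*} [Fintype α] [Fintype β]
    [DecidableEq α] [DecidableEq β] (f : α × β → α × β → ℝ) (hf : ∀ p q, 0 ≤ f p q) :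
    (∑ i, ∑ j, if i = j then 0 else ∑ m, f (i, m) (j, m)) +
        (∑ m, ∑ m', if m = m' then 0 else ∑ i, f (i, m) (i, m')) ≤
      ∑ p, ∑ q, if p = q then 0 else f p q := by
  have h_fst : (∑ i, ∑ j, if i = j then 0 else ∑ m, f (i, m) (j, m)) =
      ∑ p, ∑ q, if p.2 = q.2 ∧ p.1 ≠ q.1 then f p q else 0 := by
    simp only [Fintype.sum_prod_type, ite_and, Finset.sum_ite_eq, Finset.mem_univ, if_true]
    refine Finset.sum_congr rfl fun i _ => ?_
    rw [Finset.sum_comm]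
    refine Finset.sum_congr rfl fun j _ => ?_
    split_ifs <;> simp_all
  have h_snd : (∑ m, ∑ m', if m = m' then 0 else ∑ i, f (i, m) (i, m')) =
      ∑ p, ∑ q, if p.1 = q.1 ∧ p.2 ≠ q.2 then f p q else 0 := by
    simp only [Fintype.sum_prod_type, ite_and, Finset.sum_ite_irrel, Finset.sum_const_zero,
      Finset.sum_ite_eq, Finset.mem_univ, if_true]
    conv_rhs => rw [Finset.sum_comm]
    refine Finset.sum_congr rfl fun m _ => ?_
    rw [Finset.sum_comm]
    refine Finset.sum_congr rfl fun m' _ => ?_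
    split_ifs <;> simp_all
  rw [h_fst, h_snd, ← Finset.sum_add_distrib]
  refine Finset.sum_le_sum fun p _ => ?_
  rw [← Finset.sum_add_distrib]
  refine Finset.sum_le_sum fun q _ => ?_
  have := hf p q
  split_ifs <;> simp_all [Prod.ext_iff]

theorem CIQl1_monogamy_general {A B C : Type*} [Fintype A] [Fintype B] [Fintype C]
    [DecidableEq A] [DecidableEq B] [DecidableEq C]
    (ρ : Matrix ((A × B) × C) ((A × B) × C) ℂ) :
    CIQl1 ρ ≥
      CIQl1 ((Matrix.of fun p q =>
        ∑ m : B, ρ ((p.1, m), p.2) ((q.1, m), q.2)) : Matrix (A × C) (A × C) ℂ) +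
      CIQl1 ((Matrix.of fun p q =>
        ∑ i : A, ρ ((i, p.1), p.2) ((i, q.1), q.2)) : Matrix (B × C) (B × C) ℂ) := by
  have hAC := CIQl1_le_of_blockB_eq_sum
    ((Matrix.of fun p q => ∑ m : B, ρ ((p.1, m), p.2) ((q.1, m), q.2)) :
      Matrix (A × C) (A × C) ℂ)
    (fun i j m => blockB ρ (i, m) (j, m)) fun i j => by ext; simp [blockB, Matrix.sum_apply]
  have hBC := CIQl1_le_of_blockB_eq_sum
    ((Matrix.of fun p q => ∑ i : A, ρ ((i, p.1), p.2) ((i, q.1), q.2)) :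
      Matrix (B × C) (B × C) ℂ)
    (fun m m' i => blockB ρ (i, m) (i, m')) fun m m' => by ext; simp [blockB, Matrix.sum_apply]
  have hABC := sum_offDiag_fst_add_sum_offDiag_snd_le (fun p q => traceNorm (blockB ρ p q))
    fun p q => traceNorm_nonneg _
  exact (add_le_add hAC hBC).trans hABC

/-- monogamy: C^{AB|C}_{l1}(ρ_ABC) ≥ C^{A|C}_{l1}(ρ_AC) + C^{B|C}_{l1}(ρ_BC),
where ρ_AC = Tr_B ρ_ABC and ρ_BC = Tr_A ρ_ABC. -/
theorem CIQl1_monogamy {A B C : Type*} [Fintype A] [Fintype B] [Fintype C]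
    [DecidableEq A] [DecidableEq B] [DecidableEq C]
    (ρ : Matrix ((A × B) × C) ((A × B) × C) ℂ) (hρ : ρ.PosSemidef) (hTr : ρ.trace = 1) :
    CIQl1 ρ ≥
      CIQl1 ((Matrix.of fun p q =>
        ∑ m : B, ρ ((p.1, m), p.2) ((q.1, m), q.2)) : Matrix (A × C) (A × C) ℂ) +
      CIQl1 ((Matrix.of fun p q =>
        ∑ i : A, ρ ((i, p.1), p.2) ((i, q.1), q.2)) : Matrix (B × C) (B × C) ℂ) :=
  CIQl1_monogamy_general ρ
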